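/- arXiv:1704.07317 — 8 statements merged into one kernel-verified Lean document; each statement's English description precedes it below -/
import Mathlib

section
/- Let c ∈ ℂ and R > 0, let f : ℂ → ℂ be complex differentiable on an open set containing the closed disc {z : |z − c| ≤ R}, and let μ₁, …, μ_N be pairwise distinct complex numbers lying in the open disc {z : |z − c| < R}. Then (1/(2πi)) · ∮_{|z−c|=R} f(z) / ∏_{k=1}^{N} (z − μ_k) dz = Σ_{j=1}^{N} f(μ_j) / ∏_{k≠j} (μ_j − μ_k). -/
open Complex Finset Metric

/-!
Partial fractions split `1 / ∏ (z - μ k)` into `∑ w j / (z - μ j)`, where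
`w j = ∏_{k ≠ j} (μ j - μ k)⁻¹` are the barycentric (nodal) weights of Lagrange
interpolation; Cauchy's integral formula turns the integral of each summand against `f` into
`2πi w j f (μ j)`.
-/

namespace Lagrange

variable {F ι : Type*} [Field F] [DecidableEq ι] {s : Finset ι} {v : ι → F} {x : F}

/-- Evaluating `∑ i, basis s v i = 1` at `x` in barycentric form. -/
theorem prod_sub_inv_eq_sum_nodalWeight_mul_inv_sub (hvs : Set.InjOn v s) (hs : s.Nonempty)
    (hx : ∀ i ∈ s, x ≠ v i) :
    (∏ i ∈ s, (x - v i))⁻¹ = ∑ i ∈ s, nodalWeight s v i * (x - v i)⁻¹ := by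
  have h := eval_interpolate_not_at_node (1 : ι → F) hx
  simp only [interpolate_one hvs hs, Polynomial.eval_one, Pi.one_apply, mul_one, eval_nodal] at h
  exact (eq_inv_of_mul_eq_one_right h.symm).symm

end Lagrange

namespace DifferentiableOn

variable {E : Type*} [NormedAddCommGroup E] [NormedSpace ℂ E] [CompleteSpace E]
  {f : ℂ → E} {c : ℂ} {R : ℝ}

theorem circleIntegral_prod_sub_inv_smul {ι : Type*} [DecidableEq ι] (hR : 0 ≤ R)
    (hd : DifferentiableOn ℂ f (closedBall c R)) {s : Finset ι} {v : ι → ℂ}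
    (hvs : Set.InjOn v s) (hv : ∀ i ∈ s, v i ∈ ball c R) :
    (∮ z in C(c, R), (∏ i ∈ s, (z - v i))⁻¹ • f z) =
      (2 * Real.pi * I : ℂ) • ∑ i ∈ s, Lagrange.nodalWeight s v i • f (v i) := by
  rcases s.eq_empty_or_nonempty with rfl | hs
  · simpa using (hd.mono closure_ball_subset_closedBall).diffContOnCl.circleIntegral_eq_zero hR
  have hsphere : ∀ z ∈ sphere c R, ∀ i ∈ s, z ≠ v i := fun z hz i hi h =>
    (mem_ball.1 (hv i hi)).ne (mem_sphere.1 (h ▸ hz))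
  have hsplit : ∀ z ∈ sphere c R, (∏ i ∈ s, (z - v i))⁻¹ • f z =
      ∑ i ∈ s, Lagrange.nodalWeight s v i • ((z - v i)⁻¹ • f z) := fun z hz => by
    simp only [Lagrange.prod_sub_inv_eq_sum_nodalWeight_mul_inv_sub hvs hs (hsphere z hz),
      sum_smul, mul_smul]
  have hcont : ∀ i ∈ s, ContinuousOn (fun z => (z - v i)⁻¹ • f z) (sphere c R) :=
    fun i hi =>
      ((continuousOn_id.sub continuousOn_const).inv₀ fun z hz =>
        sub_ne_zero.2 (hsphere z hz i hi)).smul (hd.continuousOn.mono sphere_subset_closedBall)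
  rw [circleIntegral.integral_congr hR hsplit, circleIntegral.integral_fun_sum
    fun i hi => ((hcont i hi).fun_const_smul _).circleIntegrable hR, smul_sum]
  refine sum_congr rfl fun i hi => ?_
  rw [circleIntegral.integral_smul, hd.circleIntegral_sub_inv_smul (hv i hi), smul_comm]

end DifferentiableOn

theorem divided_difference_contour_integral_general
    (c : ℂ) (R : ℝ) (hR : 0 < R)
    (f : ℂ → ℂ) (U : Set ℂ)
    (hUsub : Metric.closedBall c R ⊆ U)
    (hf : DifferentiableOn ℂ f U)
    (N : ℕ) (μ : Fin N → ℂ)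
    (hdist : Function.Injective μ)
    (hμ : ∀ j, μ j ∈ Metric.ball c R) :
    (2 * Real.pi * Complex.I)⁻¹ • (∮ z in C(c, R), f z / ∏ k, (z - μ k)) =
      ∑ j, f (μ j) / ∏ k ∈ Finset.univ.erase j, (μ j - μ k) := by
  have h := DifferentiableOn.circleIntegral_prod_sub_inv_smul hR.le (hf.mono hUsub)
    (s := univ) hdist.injOn fun j _ => hμ j
  simp only [smul_eq_mul, ← div_eq_inv_mul] at h
  rw [h, smul_eq_mul, inv_mul_cancel_left₀ two_pi_I_ne_zero]
  refine sum_congr rfl fun j _ => ?_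
  rw [Lagrange.nodalWeight, prod_inv_distrib, div_eq_inv_mul]

/-- **Proposition 3** (contour-integral representation of divided differences, distinct points).
If `f` is analytic on an open set containing the closed disc of center `c` and radius `R`,
and `μ 1, …, μ N` are pairwise distinct points in the open disc, then
`(1/(2πi)) ∮_{|z-c|=R} f(z)/Ω(z) dz = f[μ 1, …, μ N]`, where `Ω(z) = ∏ (z - μ k)`
and the divided difference is given by the sum formula. -/
theorem divided_difference_contour_integral
    (c : ℂ) (R : ℝ) (hR : 0 < R)
    (f : ℂ → ℂ) (U : Set ℂ) (hU : IsOpen U)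
    (hUsub : Metric.closedBall c R ⊆ U)
    (hf : DifferentiableOn ℂ f U)
    (N : ℕ) (hN : 0 < N) (μ : Fin N → ℂ)
    (hdist : Function.Injective μ)
    (hμ : ∀ j, μ j ∈ Metric.ball c R) :
    (2 * Real.pi * Complex.I)⁻¹ • (∮ z in C(c, R), f z / ∏ k, (z - μ k)) =
      ∑ j, f (μ j) / ∏ k ∈ Finset.univ.erase j, (μ j - μ k) :=
  divided_difference_contour_integral_general c R hR f U hUsub hf N μ hdist hμ
end

section
/- Let μ₁, …, μ_k and ν₁, …, ν_m be complex numbers such that all k + m numbers are pairwise distinct, and let f : ℂ → ℂ satisfy f(μ_i) = 0 for every i = 1, …, k. Let p be the Newton interpolating polynomial of f with respect to the points taken in the order μ₁, …, μ_k, ν₁, …, ν_m, and let q be the Newton interpolating polynomial of f̃(z) = f(z) / ∏_{i=1}^{k} (z − μ_i) with respect to the points ν₁, …, ν_m. Then p(z) = (z − μ₁)⋯(z − μ_k) · q(z). -/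
open Complex Finset Polynomial

/-- The divided difference `f[μ 0, …, μ (n-1)]` with respect to the (distinct) points
`μ 0, …, μ (n-1)`, given by the sum formula of Proposition 6. -/
noncomputable def divDiffSum (f : ℂ → ℂ) (μ : ℕ → ℂ) (n : ℕ) : ℂ :=
  ∑ i ∈ Finset.range n, f (μ i) / ∏ l ∈ (Finset.range n).erase i, (μ i - μ l)

/-- The Newton interpolating polynomial of `f` with respect to the points
`μ 0, …, μ (N-1)` (taken in that order). -/
noncomputable def newtonPoly (f : ℂ → ℂ) (μ : ℕ → ℂ) (N : ℕ) : Polynomial ℂ :=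
  ∑ j ∈ Finset.range N,
    Polynomial.C (divDiffSum f μ (j + 1)) * ∏ i ∈ Finset.range j, (X - Polynomial.C (μ i))

/-- Factorization of the Newton interpolating polynomial: if `f` vanishes at the points
`μ 0, …, μ (k-1)`, and the points `μ 0, …, μ (k-1), ν 0, …, ν (m-1)` are pairwise
distinct, then the Newton interpolating polynomial `p` of `f` with respect to the points in
the order `μ 0, …, μ (k-1), ν 0, …, ν (m-1)` satisfies
`p(z) = (z - μ 0)⋯(z - μ (k-1)) · q(z)`, where `q` is the Newton interpolating polynomial of
`f̃(z) = f(z) / ∏ (z - μ i)` with respect to the points `ν 0, …, ν (m-1)`. -/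
theorem newtonPoly_factorization (k m : ℕ) (μ ν : ℕ → ℂ)
    (hμ : ∀ i < k, ∀ j < k, μ i = μ j → i = j)
    (hν : ∀ i < m, ∀ j < m, ν i = ν j → i = j)
    (hμν : ∀ i < k, ∀ j < m, μ i ≠ ν j)
    (f : ℂ → ℂ) (hf : ∀ i < k, f (μ i) = 0) :
    newtonPoly f (fun i => if i < k then μ i else ν (i - k)) (k + m) =
      (∏ i ∈ Finset.range k, (X - Polynomial.C (μ i))) *
        newtonPoly (fun z => f z / ∏ i ∈ Finset.range k, (z - μ i)) ν m := by
  set η : ℕ → ℂ := fun i => if i < k then μ i else ν (i - k) with hη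
  have hηlt : ∀ i < k, η i = μ i := fun i hi => by simp [hη, hi]
  have hηge : ∀ i, η (k + i) = ν i := fun i => by simp [hη]
  have hA : ∀ j < k, divDiffSum f η (j + 1) = 0 := by
    intro j hj
    refine Finset.sum_eq_zero fun i hi => ?_
    rw [Finset.mem_range] at hi
    rw [hηlt i (by omega), hf i (by omega), zero_div]
  have hsplit : ∀ (n s : ℕ), s < n →
      (Finset.range (k + n)).erase (k + s)
        = Finset.range k ∪ ((Finset.range n).erase s).image (fun l => k + l) := by
    intro n s hs
    ext x
    simp only [Finset.mem_erase, Finset.mem_range, Finset.mem_union, Finset.mem_image]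
    constructor
    · rintro ⟨h1, h2⟩
      by_cases hx : x < k
      · exact Or.inl hx
      · exact Or.inr ⟨x - k, ⟨by omega, by omega⟩, by omega⟩
    · rintro (h | ⟨l, ⟨hl1, hl2⟩, rfl⟩) <;> omega
  have hB : ∀ t < m, divDiffSum f η (k + t + 1) =
      divDiffSum (fun z => f z / ∏ i ∈ Finset.range k, (z - μ i)) ν (t + 1) := by
    intro t ht
    unfold divDiffSum
    have hkt : k + t + 1 = k + (t + 1) := by ring
    rw [hkt, Finset.sum_range_add]
    have h0 : ∑ i ∈ Finset.range k,
        f (η i) / ∏ l ∈ (Finset.range (k + (t + 1))).erase i, (η i - η l) = 0 :=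
      Finset.sum_eq_zero fun i hi => by
        rw [Finset.mem_range] at hi
        rw [hηlt i hi, hf i hi, zero_div]
    rw [h0, zero_add]
    refine Finset.sum_congr rfl fun s hs => ?_
    rw [Finset.mem_range] at hs
    rw [hηge s, hsplit (t + 1) s hs,
      Finset.prod_union (by
        simp only [Finset.disjoint_left, Finset.mem_range, Finset.mem_image,
          Finset.mem_erase]
        omega),
      Finset.prod_image (fun a _ b _ h => by omega)]
    rw [div_div]
    congr 1
    congr 1
    · refine Finset.prod_congr rfl fun l hl => ?_
      rw [Finset.mem_range] at hl
      rw [hηlt l hl]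
    · refine Finset.prod_congr rfl fun l _ => ?_
      rw [hηge l]
  unfold newtonPoly
  rw [Finset.sum_range_add]
  have h1 : ∑ j ∈ Finset.range k,
      Polynomial.C (divDiffSum f η (j + 1)) * ∏ i ∈ Finset.range j, (X - Polynomial.C (η i))
        = 0 :=
    Finset.sum_eq_zero fun j hj => by
      rw [Finset.mem_range] at hj
      rw [hA j hj, map_zero, zero_mul]
  rw [h1, zero_add, Finset.mul_sum]
  refine Finset.sum_congr rfl fun t ht => ?_
  rw [Finset.mem_range] at ht
  rw [show k + t + 1 = k + t + 1 from rfl, hB t ht, Finset.prod_range_add]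
  have hprod1 : ∏ i ∈ Finset.range k, (X - Polynomial.C (η i))
      = ∏ i ∈ Finset.range k, (X - Polynomial.C (μ i)) :=
    Finset.prod_congr rfl fun i hi => by rw [hηlt i (Finset.mem_range.mp hi)]
  have hprod2 : ∏ i ∈ Finset.range t, (X - Polynomial.C (η (k + i)))
      = ∏ i ∈ Finset.range t, (X - Polynomial.C (ν i)) :=
    Finset.prod_congr rfl fun i _ => by rw [hηge i]
  rw [hprod1, hprod2]; ring
end

section
/- Let t > 0. Let μ₁, …, μ_k be pairwise distinct complex numbers with Re μ_i > 0, and ν₁, …, ν_m pairwise distinct complex numbers with Re ν_j < 0. Let exp_t⁺ : ℂ → ℂ be defined by exp_t⁺(z) = e^{zt} if Re z < 0 and exp_t⁺(z) = 0 if Re z ≥ 0. Then the Newton interpolating polynomial p_t⁺ of exp_t⁺ with respect to the points in the order μ₁, …, μ_k, ν₁, …, ν_m satisfies p_t⁺(z) = (z − μ₁)⋯(z − μ_k) · q_t⁺(z), where q_t⁺ is the Newton interpolating polynomial, with respect to the points ν₁, …, ν_m, of the function z ↦ e^{zt} / ∏_{i=1}^{k} (z − μ_i). -/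
open Complex Finset Polynomial

/-- The function `exp_t⁺`: `exp_t⁺(λ) = e^{λ t}` for `Re λ < 0`; `exp_t⁺(λ) = 0` for
`Re λ ≥ 0`. -/
noncomputable def expPlus (t : ℝ) (z : ℂ) : ℂ :=
  if z.re < 0 then Complex.exp (z * t) else 0

/-- **Theorem 12** (first half, distinct eigenvalues): let `t > 0`, let the eigenvalues
`μ 0, …, μ (k-1)` lie in the open right half-plane and `ν 0, …, ν (m-1)` in the open left
half-plane, all pairwise distinct.  Then the Newton interpolating polynomial `p_t⁺` of
`exp_t⁺` with respect to the points in the order `μ 0, …, μ (k-1), ν 0, …, ν (m-1)`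
satisfies `p_t⁺(z) = (z - μ 0)⋯(z - μ (k-1)) q_t⁺(z)`, where `q_t⁺` is the Newton
interpolating polynomial of `z ↦ e^{z t} / ∏ (z - μ i)` with respect to `ν 0, …, ν (m-1)`. -/
theorem newtonPoly_expPlus_factorization (t : ℝ) (ht : 0 < t) (k m : ℕ) (μ ν : ℕ → ℂ)
    (hμre : ∀ i < k, 0 < (μ i).re) (hνre : ∀ j < m, (ν j).re < 0)
    (hμ : ∀ i < k, ∀ j < k, μ i = μ j → i = j)
    (hν : ∀ i < m, ∀ j < m, ν i = ν j → i = j) :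
    newtonPoly (expPlus t) (fun i => if i < k then μ i else ν (i - k)) (k + m) =
      (∏ i ∈ Finset.range k, (X - Polynomial.C (μ i))) *
        newtonPoly (fun z => Complex.exp (z * t) / ∏ i ∈ Finset.range k, (z - μ i)) ν m := by
  set η : ℕ → ℂ := fun i => if i < k then μ i else ν (i - k) with hη
  have hημ : ∀ i < k, η i = μ i := by intro i hi; simp [hη, hi]
  have hην : ∀ r, η (k + r) = ν r := by intro r; simp [hη]
  have hzero : ∀ i < k, expPlus t (η i) = 0 := by
    intro i hi
    rw [hημ i hi]
    simp [expPlus, not_lt.2 (hμre i hi).le]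
  -- divided differences of order ≤ k vanish
  have hdd0 : ∀ j < k, divDiffSum (expPlus t) η (j + 1) = 0 := by
    intro j hj
    refine Finset.sum_eq_zero fun i hi => ?_
    have hik : i < k := lt_of_lt_of_le (Finset.mem_range.1 hi) hj
    rw [hzero i hik, zero_div]
  -- key identity for divided differences of order > k
  have hdd : ∀ s < m, divDiffSum (expPlus t) η (k + s + 1) =
      divDiffSum (fun z => Complex.exp (z * t) / ∏ i ∈ Finset.range k, (z - μ i)) ν (s + 1) := by
    intro s hs
    unfold divDiffSum
    have hk1 : k + s + 1 = k + (s + 1) := by ring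
    rw [hk1, Finset.sum_range_add]
    have h1 : ∑ i ∈ Finset.range k,
        expPlus t (η i) / ∏ l ∈ (Finset.range (k + (s + 1))).erase i, (η i - η l) = 0 := by
      refine Finset.sum_eq_zero fun i hi => ?_
      rw [hzero i (Finset.mem_range.1 hi), zero_div]
    rw [h1, zero_add]
    refine Finset.sum_congr rfl fun r hr => ?_
    have hrm : r < m := lt_of_lt_of_le (Finset.mem_range.1 hr) hs
    have hprod : ∏ l ∈ (Finset.range (k + (s + 1))).erase (k + r), (η (k + r) - η l) =
        (∏ l ∈ Finset.range k, (ν r - μ l)) *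
          ∏ l ∈ (Finset.range (s + 1)).erase r, (ν r - ν l) := by
      rw [Finset.range_add, Finset.erase_union_distrib]
      have hkr : k + r ∉ Finset.range k := by simp
      rw [Finset.erase_eq_of_notMem hkr]
      have hmape : ((Finset.range (s + 1)).map (addLeftEmbedding k)).erase (k + r) =
          ((Finset.range (s + 1)).erase r).map (addLeftEmbedding k) := by
        rw [Finset.map_erase]; rfl
      rw [hmape, Finset.prod_union, Finset.prod_map]
      · congr 1
        · refine Finset.prod_congr rfl fun l hl => ?_
          rw [hην r, hημ l (Finset.mem_range.1 hl)]
        · refine Finset.prod_congr rfl fun l hl => ?_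
          have : addLeftEmbedding k l = k + l := rfl
          rw [hην r, this, hην l]
      · rw [Finset.disjoint_left]
        intro a ha hb
        simp only [Finset.mem_map, Finset.mem_erase] at hb
        obtain ⟨b, _, hba⟩ := hb
        have h1 : a = k + b := hba.symm
        have h2 : a < k := Finset.mem_range.1 ha
        omega
    rw [hprod, hην r]
    have hexp : expPlus t (ν r) = Complex.exp (ν r * t) := by
      simp [expPlus, hνre r hrm]
    rw [hexp, ← div_div]
  -- assemble
  unfold newtonPoly
  rw [Finset.sum_range_add]
  have h1 : ∑ j ∈ Finset.range k, Polynomial.C (divDiffSum (expPlus t) η (j + 1)) *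
      ∏ i ∈ Finset.range j, (X - Polynomial.C (η i)) = 0 := by
    refine Finset.sum_eq_zero fun j hj => ?_
    rw [hdd0 j (Finset.mem_range.1 hj), map_zero, zero_mul]
  rw [h1, zero_add, Finset.mul_sum]
  refine Finset.sum_congr rfl fun s hs => ?_
  rw [hdd s (Finset.mem_range.1 hs), Finset.prod_range_add]
  have h2 : ∏ i ∈ Finset.range k, (X - Polynomial.C (η i)) =
      ∏ i ∈ Finset.range k, (X - Polynomial.C (μ i)) :=
    Finset.prod_congr rfl fun i hi => by rw [hημ i (Finset.mem_range.1 hi)]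
  have h3 : ∏ i ∈ Finset.range s, (X - Polynomial.C (η (k + i))) =
      ∏ i ∈ Finset.range s, (X - Polynomial.C (ν i)) :=
    Finset.prod_congr rfl fun i hi => by rw [hην i]
  rw [h2, h3]
  ring
end

section
/- Let μ₁, …, μ_k be pairwise distinct complex numbers with Re μ_i > 0, and ν₁, …, ν_m pairwise distinct complex numbers with Re ν_j < 0. Let π⁺ : ℂ → ℂ be defined by π⁺(z) = 1 if Re z < 0 and π⁺(z) = 0 if Re z ≥ 0. Then the Newton interpolating polynomial s⁺ of π⁺ with respect to the points in the order μ₁, …, μ_k, ν₁, …, ν_m satisfies s⁺(z) = (z − μ₁)⋯(z − μ_k) · r⁺(z), where r⁺ is the Newton interpolating polynomial, with respect to the points ν₁, …, ν_m, of the function z ↦ 1 / ∏_{i=1}^{k} (z − μ_i). -/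
open Complex Finset Polynomial

/-- The function `π⁺`: `π⁺(λ) = 1` for `Re λ < 0`; `π⁺(λ) = 0` for `Re λ ≥ 0`. -/
noncomputable def piPlus (z : ℂ) : ℂ := if z.re < 0 then 1 else 0

/-- **Corollary 13** (first half, distinct eigenvalues): let the eigenvalues
`μ 0, …, μ (k-1)` lie in the open right half-plane and `ν 0, …, ν (m-1)` in the open left
half-plane, all pairwise distinct.  Then the Newton interpolating polynomial `s⁺` of `π⁺`
with respect to the points in the order `μ 0, …, μ (k-1), ν 0, …, ν (m-1)` satisfies
`s⁺(z) = (z - μ 0)⋯(z - μ (k-1)) r⁺(z)`, where `r⁺` is the Newton interpolating polynomial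
of `z ↦ 1 / ∏ (z - μ i)` with respect to `ν 0, …, ν (m-1)`. -/
theorem newtonPoly_piPlus_factorization (k m : ℕ) (μ ν : ℕ → ℂ)
    (hμre : ∀ i < k, 0 < (μ i).re) (hνre : ∀ j < m, (ν j).re < 0)
    (hμ : ∀ i < k, ∀ j < k, μ i = μ j → i = j)
    (hν : ∀ i < m, ∀ j < m, ν i = ν j → i = j) :
    newtonPoly piPlus (fun i => if i < k then μ i else ν (i - k)) (k + m) =
      (∏ i ∈ Finset.range k, (X - Polynomial.C (μ i))) *
        newtonPoly (fun z => 1 / ∏ i ∈ Finset.range k, (z - μ i)) ν m := by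

  set η : ℕ → ℂ := fun i => if i < k then μ i else ν (i - k) with hη
  have hηlt : ∀ i, i < k → η i = μ i := fun i hi => if_pos hi
  have hηge : ∀ t : ℕ, η (k + t) = ν t := by
    intro t
    simp only [hη]
    rw [if_neg (by omega), Nat.add_sub_cancel_left]
  have hpμ : ∀ i < k, piPlus (μ i) = 0 := by
    intro i hi
    unfold piPlus
    rw [if_neg (not_lt.mpr (le_of_lt (hμre i hi)))]
  have hpν : ∀ j < m, piPlus (ν j) = 1 := by
    intro j hj
    unfold piPlus
    rw [if_pos (hνre j hj)]
  have hA : ∀ j < k, divDiffSum piPlus η (j + 1) = 0 := by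
    intro j hj
    unfold divDiffSum
    refine Finset.sum_eq_zero fun i hi => ?_
    rw [Finset.mem_range] at hi
    have hik : i < k := by omega
    rw [hηlt i hik, hpμ i hik, zero_div]
  have hB : ∀ j < m, divDiffSum piPlus η (k + j + 1) =
      divDiffSum (fun z => 1 / ∏ i ∈ Finset.range k, (z - μ i)) ν (j + 1) := by
    intro j hj
    unfold divDiffSum
    rw [show k + j + 1 = k + (j + 1) by ring, Finset.sum_range_add]
    have h0 : ∑ i ∈ Finset.range k,
        piPlus (η i) / ∏ l ∈ (Finset.range (k + (j+1))).erase i, (η i - η l) = 0 := by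
      refine Finset.sum_eq_zero fun i hi => ?_
      rw [Finset.mem_range] at hi
      rw [hηlt i hi, hpμ i hi, zero_div]
    rw [h0, zero_add]
    refine Finset.sum_congr rfl fun t ht => ?_
    rw [Finset.mem_range] at ht
    have htm : t < m := by omega
    rw [hηge t, hpν t htm]
    have hset : (Finset.range (k + (j+1))).erase (k + t) =
        Finset.range k ∪ ((Finset.range (j+1)).erase t).image (k + ·) := by
      ext x
      simp only [Finset.mem_erase, Finset.mem_range, Finset.mem_union, Finset.mem_image]
      constructor
      · rintro ⟨hne, hx⟩
        by_cases hxk : x < k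
        · exact Or.inl hxk
        · exact Or.inr ⟨x - k, ⟨by omega, by omega⟩, by omega⟩
      · rintro (h | ⟨y, ⟨hy1, hy2⟩, rfl⟩) <;> omega
    rw [hset, Finset.prod_union, Finset.prod_image (fun a _ b _ h => by omega)]
    · have hcμ : ∏ l ∈ Finset.range k, (ν t - η l) = ∏ l ∈ Finset.range k, (ν t - μ l) := by
        refine Finset.prod_congr rfl fun l hl => ?_
        rw [hηlt l (Finset.mem_range.mp hl)]
      have hcν : ∏ l ∈ (Finset.range (j+1)).erase t, (ν t - η (k + l)) =
          ∏ l ∈ (Finset.range (j+1)).erase t, (ν t - ν l) := by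
        refine Finset.prod_congr rfl fun l hl => ?_
        rw [hηge l]
      rw [hcμ, hcν, div_mul_eq_div_div]
    · rw [Finset.disjoint_left]
      intro a ha hb
      rw [Finset.mem_range] at ha
      simp only [Finset.mem_image, Finset.mem_erase, Finset.mem_range] at hb
      obtain ⟨y, _, hy⟩ := hb
      omega
  unfold newtonPoly
  rw [Finset.sum_range_add]
  have h1 : ∑ j ∈ Finset.range k,
      Polynomial.C (divDiffSum piPlus η (j + 1)) * ∏ i ∈ Finset.range j, (X - Polynomial.C (η i)) = 0 :=
    Finset.sum_eq_zero fun j hj => by rw [hA j (Finset.mem_range.mp hj), map_zero, zero_mul]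
  rw [h1, zero_add, Finset.mul_sum]
  refine Finset.sum_congr rfl fun j hj => ?_
  rw [Finset.mem_range] at hj
  rw [show k + j + 1 = k + j + 1 from rfl, hB j hj, Finset.prod_range_add]
  have h2 : ∏ i ∈ Finset.range k, (X - Polynomial.C (η i)) =
      ∏ i ∈ Finset.range k, (X - Polynomial.C (μ i)) := by
    refine Finset.prod_congr rfl fun i hi => by rw [hηlt i (Finset.mem_range.mp hi)]
  have h3 : ∏ i ∈ Finset.range j, (X - Polynomial.C (η (k + i))) =
      ∏ i ∈ Finset.range j, (X - Polynomial.C (ν i)) := by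
    refine Finset.prod_congr rfl fun i hi => by rw [hηge i]
  rw [h2, h3]
  ring
end

section
/- Let λ, μ ∈ ℂ with Re λ ≠ 0 and Re μ ≠ 0, and let t > 0. Then the function s ↦ g_s(λ) g_{t−s}(μ) is integrable on ℝ and ∫_{−∞}^{∞} g_s(λ) g_{t−s}(μ) ds = exp_t⁺[λ, μ], where exp_t⁺[λ, μ] is defined as follows: (e^{λt} − e^{μt})/(λ − μ) if Re λ < 0, Re μ < 0, and λ ≠ μ; t e^{λt} if Re λ < 0 and λ = μ; e^{λt}/(λ − μ) if Re λ < 0 and Re μ > 0; −e^{μt}/(λ − μ) if Re λ > 0 and Re μ < 0; 0 if Re λ > 0 and Re μ > 0. -/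
open Complex MeasureTheory

/-- The scalar Green's function `g_t(λ)`: for `t > 0` (and `t = 0`), `g_t(λ) = e^{λ t}` if
`Re λ < 0` and `g_t(λ) = 0` if `Re λ > 0`; for `t < 0`, `g_t(λ) = −e^{λ t}` if `Re λ > 0`
and `g_t(λ) = 0` if `Re λ < 0`. -/
noncomputable def greenG (t : ℝ) (lam : ℂ) : ℂ :=
  if 0 ≤ t then (if lam.re < 0 then Complex.exp (lam * t) else 0)
  else (if 0 < lam.re then -Complex.exp (lam * t) else 0)

/-- The divided difference `exp_t⁺[λ, μ]` of the function `exp_t⁺`. -/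
noncomputable def expPlusDD (t : ℝ) (lam mu : ℂ) : ℂ :=
  if lam.re < 0 then
    (if mu.re < 0 then
      (if lam = mu then (t : ℂ) * Complex.exp (lam * t)
        else (Complex.exp (lam * t) - Complex.exp (mu * t)) / (lam - mu))
      else Complex.exp (lam * t) / (lam - mu))
  else
    (if mu.re < 0 then -Complex.exp (mu * t) / (lam - mu) else 0)

/-!
For `t ≥ 0` the integrand `g_s(λ) g_{t-s}(μ)` vanishes outside `[0, t]`, `(t, ∞)` or `(-∞, 0)`
according to the signs of `Re λ` and `Re μ` (and vanishes identically when both are positive);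
there it equals `± e^{μt} e^{(λ-μ)s}`. On the half-lines `Re (λ - μ)` has the sign that makes this
exponential integrable, so each case is an elementary exponential integral.
-/

open Set

lemma exp_mul_mul_exp_mul_sub (lam mu : ℂ) (t s : ℝ) :
    exp (lam * s) * exp (mu * ↑(t - s)) = exp (mu * t) * exp ((lam - mu) * s) := by
  rw [← Complex.exp_add, ← Complex.exp_add]
  push_cast
  ring_nf

section GreenProduct

variable {lam mu : ℂ} {t : ℝ}

lemma greenG_of_nonneg_of_re_pos {s : ℝ} (hs : 0 ≤ s) (hl : 0 < lam.re) : greenG s lam = 0 := by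
  simp [greenG, hs, hl.le]

lemma greenG_of_neg_of_re_neg {s : ℝ} (hs : s < 0) (hl : lam.re < 0) : greenG s lam = 0 := by
  simp [greenG, not_le.2 hs, not_lt.2 hl.le]

lemma greenG_mul_greenG_of_re_neg_of_re_neg (hl : lam.re < 0) (hm : mu.re < 0) :
    (fun s : ℝ => greenG s lam * greenG (t - s) mu) =
      (Icc 0 t).indicator fun s => exp (mu * t) * exp ((lam - mu) * s) := by
  ext s
  by_cases hs : s ∈ Icc 0 t
  · have h0 : 0 ≤ t - s := by linarith [hs.2]
    simp [indicator_of_mem hs, greenG, hs.1, h0, hl, hm, ← exp_mul_mul_exp_mul_sub]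
  · rw [indicator_of_notMem hs]
    rcases not_and_or.1 hs with h | h
    · rw [greenG_of_neg_of_re_neg (not_le.1 h) hl, zero_mul]
    · rw [greenG_of_neg_of_re_neg (by linarith [not_le.1 h]) hm, mul_zero]

lemma greenG_mul_greenG_of_re_neg_of_re_pos (hl : lam.re < 0) (hm : 0 < mu.re) (ht : 0 ≤ t) :
    (fun s : ℝ => greenG s lam * greenG (t - s) mu) =
      (Ioi t).indicator fun s => -exp (mu * t) * exp ((lam - mu) * s) := by
  ext s
  by_cases hs : t < s
  · have h0 : ¬ 0 ≤ t - s := by linarith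
    simp [indicator_of_mem (mem_Ioi.2 hs), greenG, ht.trans hs.le, h0, hl, hm,
      ← exp_mul_mul_exp_mul_sub]
  · rw [indicator_of_notMem (notMem_Ioi.2 (not_lt.1 hs)),
      greenG_of_nonneg_of_re_pos (by linarith [not_lt.1 hs]) hm, mul_zero]

lemma greenG_mul_greenG_of_re_pos_of_re_neg (hl : 0 < lam.re) (hm : mu.re < 0) (ht : 0 ≤ t) :
    (fun s : ℝ => greenG s lam * greenG (t - s) mu) =
      (Iio 0).indicator fun s : ℝ => -exp (mu * t) * exp ((lam - mu) * s) := by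
  ext s
  by_cases hs : s < 0
  · have h0 : 0 ≤ t - s := by linarith
    simp [indicator_of_mem (mem_Iio.2 hs), greenG, not_le.2 hs, h0, hl, hm,
      ← exp_mul_mul_exp_mul_sub]
  · rw [indicator_of_notMem (notMem_Iio.2 (not_lt.1 hs)),
      greenG_of_nonneg_of_re_pos (not_lt.1 hs) hl, zero_mul]

lemma greenG_mul_greenG_of_re_pos_of_re_pos (hl : 0 < lam.re) (hm : 0 < mu.re) (ht : 0 ≤ t) :
    (fun s : ℝ => greenG s lam * greenG (t - s) mu) = 0 := by
  ext s
  rcases le_or_gt 0 s with hs | hs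
  · rw [greenG_of_nonneg_of_re_pos hs hl, zero_mul, Pi.zero_apply]
  · rw [greenG_of_nonneg_of_re_pos (by linarith) hm, mul_zero, Pi.zero_apply]

end GreenProduct

section GreenConvolution

variable {lam mu : ℂ} {t : ℝ}

lemma integral_greenG_mul_greenG_of_re_neg_of_re_neg (hl : lam.re < 0) (hm : mu.re < 0)
    (ht : 0 ≤ t) :
    Integrable (fun s : ℝ => greenG s lam * greenG (t - s) mu) ∧
      ∫ s : ℝ, greenG s lam * greenG (t - s) mu =
        exp (mu * t) * ∫ s in (0 : ℝ)..t, exp ((lam - mu) * s) := by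
  rw [greenG_mul_greenG_of_re_neg_of_re_neg hl hm]
  refine ⟨(integrable_indicator_iff measurableSet_Icc).2
    (Continuous.integrableOn_Icc (by fun_prop)), ?_⟩
  rw [integral_indicator measurableSet_Icc, integral_Icc_eq_integral_Ioc,
    ← intervalIntegral.integral_of_le ht, intervalIntegral.integral_const_mul]

lemma integral_greenG_mul_greenG_of_re_neg_of_re_neg_of_ne (hl : lam.re < 0) (hm : mu.re < 0)
    (hne : lam ≠ mu) (ht : 0 ≤ t) :
    Integrable (fun s : ℝ => greenG s lam * greenG (t - s) mu) ∧
      ∫ s : ℝ, greenG s lam * greenG (t - s) mu =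
        (exp (lam * t) - exp (mu * t)) / (lam - mu) := by
  refine (integral_greenG_mul_greenG_of_re_neg_of_re_neg hl hm ht).imp_right fun h => ?_
  rw [h, integral_exp_mul_complex (sub_ne_zero.2 hne), ofReal_zero, mul_zero, exp_zero,
    mul_div_assoc', mul_sub, mul_one, ← exp_add]
  ring_nf

lemma integral_greenG_mul_greenG_self_of_re_neg (hl : lam.re < 0) (ht : 0 ≤ t) :
    Integrable (fun s : ℝ => greenG s lam * greenG (t - s) lam) ∧
      ∫ s : ℝ, greenG s lam * greenG (t - s) lam = t * exp (lam * t) := by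
  refine (integral_greenG_mul_greenG_of_re_neg_of_re_neg hl hl ht).imp_right fun h => ?_
  simp [h, mul_comm]

lemma integral_greenG_mul_greenG_of_re_neg_of_re_pos (hl : lam.re < 0) (hm : 0 < mu.re)
    (ht : 0 ≤ t) :
    Integrable (fun s : ℝ => greenG s lam * greenG (t - s) mu) ∧
      ∫ s : ℝ, greenG s lam * greenG (t - s) mu = exp (lam * t) / (lam - mu) := by
  have hc : (lam - mu).re < 0 := by rw [sub_re]; linarith
  rw [greenG_mul_greenG_of_re_neg_of_re_pos hl hm ht]
  refine ⟨(integrable_indicator_iff measurableSet_Ioi).2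
    ((integrableOn_exp_mul_complex_Ioi hc t).const_mul _), ?_⟩
  rw [integral_indicator measurableSet_Ioi, integral_const_mul,
    integral_exp_mul_complex_Ioi hc, mul_div_assoc', neg_mul_neg, ← exp_add]
  ring_nf

lemma integral_greenG_mul_greenG_of_re_pos_of_re_neg (hl : 0 < lam.re) (hm : mu.re < 0)
    (ht : 0 ≤ t) :
    Integrable (fun s : ℝ => greenG s lam * greenG (t - s) mu) ∧
      ∫ s : ℝ, greenG s lam * greenG (t - s) mu = -exp (mu * t) / (lam - mu) := by
  have hc : 0 < (lam - mu).re := by rw [sub_re]; linarith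
  rw [greenG_mul_greenG_of_re_pos_of_re_neg hl hm ht]
  refine ⟨(integrable_indicator_iff measurableSet_Iio).2
    (((integrableOn_exp_mul_complex_Iic hc 0).mono_set Iio_subset_Iic_self).const_mul _), ?_⟩
  rw [integral_indicator measurableSet_Iio, ← integral_Iic_eq_integral_Iio,
    integral_const_mul, integral_exp_mul_complex_Iic hc, ofReal_zero, mul_zero, exp_zero]
  ring

lemma integral_greenG_mul_greenG_of_re_pos_of_re_pos (hl : 0 < lam.re) (hm : 0 < mu.re)
    (ht : 0 ≤ t) :
    Integrable (fun s : ℝ => greenG s lam * greenG (t - s) mu) ∧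
      ∫ s : ℝ, greenG s lam * greenG (t - s) mu = 0 := by
  rw [greenG_mul_greenG_of_re_pos_of_re_pos hl hm ht]
  exact ⟨integrable_zero _ _ _, integral_zero _ _⟩

end GreenConvolution

/-- Key identity in the proof of **Theorem 15**, case `t > 0`: for `Re λ ≠ 0`, `Re μ ≠ 0`
and `t > 0`, the function `s ↦ g_s(λ) g_{t−s}(μ)` is integrable on `ℝ` and
`∫_{−∞}^{∞} g_s(λ) g_{t−s}(μ) ds = exp_t⁺[λ, μ]`. -/
theorem integral_greenG_mul_greenG_pos (lam mu : ℂ) (hlam : lam.re ≠ 0) (hmu : mu.re ≠ 0)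
    (t : ℝ) (ht : 0 < t) :
    Integrable (fun s : ℝ => greenG s lam * greenG (t - s) mu) ∧
    ∫ s : ℝ, greenG s lam * greenG (t - s) mu = expPlusDD t lam mu := by
  rcases hlam.lt_or_gt with hl | hl <;> rcases hmu.lt_or_gt with hm | hm
  · by_cases he : lam = mu
    · subst he
      simpa [expPlusDD, hl] using integral_greenG_mul_greenG_self_of_re_neg hl ht.le
    · simpa [expPlusDD, hl, hm, he] using
        integral_greenG_mul_greenG_of_re_neg_of_re_neg_of_ne hl hm he ht.le
  · simpa [expPlusDD, hl, hm.not_gt] using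
      integral_greenG_mul_greenG_of_re_neg_of_re_pos hl hm ht.le
  · simpa [expPlusDD, hl.not_gt, hm] using
      integral_greenG_mul_greenG_of_re_pos_of_re_neg hl hm ht.le
  · simpa [expPlusDD, hl.not_gt, hm.not_gt] using
      integral_greenG_mul_greenG_of_re_pos_of_re_pos hl hm ht.le
end

section
/- Let λ, μ ∈ ℂ with Re λ ≠ 0 and Re μ ≠ 0, and let t < 0. Then the function s ↦ g_s(λ) g_{t−s}(μ) is integrable on ℝ and ∫_{−∞}^{∞} g_s(λ) g_{t−s}(μ) ds = −exp_t⁻[λ, μ], where exp_t⁻[λ, μ] is defined as follows: 0 if Re λ < 0 and Re μ < 0; −e^{μt}/(λ − μ) if Re λ < 0 and Re μ > 0; e^{λt}/(λ − μ) if Re λ > 0 and Re μ < 0; (e^{λt} − e^{μt})/(λ − μ) if Re λ > 0, Re μ > 0, and λ ≠ μ; t e^{λt} if Re λ > 0 and λ = μ. -/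
open Complex MeasureTheory

/-- The divided difference `exp_t⁻[λ, μ]` of the function `exp_t⁻`. -/
noncomputable def expMinusDD (t : ℝ) (lam mu : ℂ) : ℂ :=
  if lam.re < 0 then
    (if mu.re < 0 then 0 else -Complex.exp (mu * t) / (lam - mu))
  else
    (if mu.re < 0 then Complex.exp (lam * t) / (lam - mu)
      else (if lam = mu then (t : ℂ) * Complex.exp (lam * t)
        else (Complex.exp (lam * t) - Complex.exp (mu * t)) / (lam - mu)))

/-!
For `t < 0` the integrand `g_s(λ) g_{t−s}(μ)` is `± e^{μt} e^{(λ−μ)s}` on an interval fixed by the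
signs of `Re λ` and `Re μ` — `[0, ∞)`, `(−∞, t]` or `(t, 0)` — and vanishes off it; when both real
parts are negative it vanishes everywhere, as `s ≥ 0` and `t − s ≥ 0` are then incompatible.
Each case is an elementary exponential integral, convergent because `Re (λ − μ)` has the right sign
on the unbounded intervals.
-/

open Set

lemma cexp_mul_mul_cexp_mul_sub (lam mu t s : ℂ) :
    exp (lam * s) * exp (mu * (t - s)) = exp (mu * t) * exp ((lam - mu) * s) := by
  rw [← Complex.exp_add, ← Complex.exp_add]
  ring_nf

lemma cexp_mul_mul_cexp_sub_mul (lam mu t : ℂ) :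
    exp (mu * t) * exp ((lam - mu) * t) = exp (lam * t) := by
  rw [← Complex.exp_add]
  ring_nf

namespace greenG

variable {lam mu : ℂ} {t : ℝ}

lemma mul_greenG_sub_of_re_neg_of_re_neg (hl : lam.re < 0) (hm : mu.re < 0) (ht : t < 0)
    (s : ℝ) : greenG s lam * greenG (t - s) mu = 0 := by
  by_cases hs : 0 ≤ s
  · simp [greenG, show ¬ 0 ≤ t - s by linarith, hm.not_gt]
  · simp [greenG, hs, hl.not_gt]

lemma mul_greenG_sub_of_re_neg_of_re_pos (hl : lam.re < 0) (hm : 0 < mu.re) (ht : t < 0) :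
    (fun s => greenG s lam * greenG (t - s) mu) =
      (Ici 0).indicator fun s : ℝ => -exp (mu * t) * exp ((lam - mu) * s) := by
  ext s
  by_cases hs : 0 ≤ s
  · simp [greenG, hs, hl, hm, show ¬ 0 ≤ t - s by linarith, cexp_mul_mul_cexp_mul_sub]
  · simp [greenG, hs, hl.not_gt]

lemma mul_greenG_sub_of_re_pos_of_re_neg (hl : 0 < lam.re) (hm : mu.re < 0) (ht : t < 0) :
    (fun s => greenG s lam * greenG (t - s) mu) =
      (Iic t).indicator fun s : ℝ => -exp (mu * t) * exp ((lam - mu) * s) := by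
  ext s
  by_cases hs : s ≤ t
  · simp [greenG, hs, hl, hm, show ¬ 0 ≤ s by linarith, cexp_mul_mul_cexp_mul_sub]
  · simp [greenG, hs, hm.not_gt, show ¬ 0 ≤ t - s by linarith]

lemma mul_greenG_sub_of_re_pos_of_re_pos (hl : 0 < lam.re) (hm : 0 < mu.re) :
    (fun s => greenG s lam * greenG (t - s) mu) =
      (Ioo t 0).indicator fun s : ℝ => exp (mu * t) * exp ((lam - mu) * s) := by
  ext s
  rcases lt_or_ge s 0 with hs | hs
  · by_cases hts : t < s
    · simp [greenG, hs, hts, hl, hm, hs.not_ge, show ¬ 0 ≤ t - s by linarith,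
        cexp_mul_mul_cexp_mul_sub]
    · simp [greenG, hts, hm.not_gt, show 0 ≤ t - s by linarith]
  · simp [greenG, hs, hl.not_gt, hs.not_gt]

lemma integrable_and_integral_of_re_neg_of_re_pos (hl : lam.re < 0) (hm : 0 < mu.re)
    (ht : t < 0) :
    Integrable (fun s : ℝ => greenG s lam * greenG (t - s) mu) ∧
      ∫ s : ℝ, greenG s lam * greenG (t - s) mu = exp (mu * t) / (lam - mu) := by
  have hre : (lam - mu).re < 0 := by rw [sub_re]; linarith
  rw [mul_greenG_sub_of_re_neg_of_re_pos hl hm ht]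
  refine ⟨IntegrableOn.integrable_indicator ?_ measurableSet_Ici, ?_⟩
  · rw [integrableOn_Ici_iff_integrableOn_Ioi]
    exact (integrableOn_exp_mul_complex_Ioi hre 0).const_mul _
  · rw [integral_indicator measurableSet_Ici, integral_Ici_eq_integral_Ioi, integral_const_mul,
      integral_exp_mul_complex_Ioi hre]
    simp [div_eq_mul_inv]

lemma integrable_and_integral_of_re_pos_of_re_neg (hl : 0 < lam.re) (hm : mu.re < 0)
    (ht : t < 0) :
    Integrable (fun s : ℝ => greenG s lam * greenG (t - s) mu) ∧
      ∫ s : ℝ, greenG s lam * greenG (t - s) mu = -exp (lam * t) / (lam - mu) := by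
  have hre : 0 < (lam - mu).re := by rw [sub_re]; linarith
  rw [mul_greenG_sub_of_re_pos_of_re_neg hl hm ht]
  refine ⟨IntegrableOn.integrable_indicator ?_ measurableSet_Iic, ?_⟩
  · exact (integrableOn_exp_mul_complex_Iic hre t).const_mul _
  · rw [integral_indicator measurableSet_Iic, integral_const_mul,
      integral_exp_mul_complex_Iic hre, neg_mul, mul_div_assoc', cexp_mul_mul_cexp_sub_mul,
      neg_div]

lemma integrable_and_integral_of_re_pos_of_re_pos (hl : 0 < lam.re) (hm : 0 < mu.re)
    (ht : t ≤ 0) :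
    Integrable (fun s : ℝ => greenG s lam * greenG (t - s) mu) ∧
      ∫ s : ℝ, greenG s lam * greenG (t - s) mu =
        exp (mu * t) * ∫ s in t..0, exp ((lam - mu) * s) := by
  rw [mul_greenG_sub_of_re_pos_of_re_pos hl hm]
  refine ⟨IntegrableOn.integrable_indicator ?_ measurableSet_Ioo, ?_⟩
  · exact (Continuous.integrableOn_Icc (by fun_prop)).mono_set Ioo_subset_Icc_self
  · rw [integral_indicator measurableSet_Ioo, ← integral_Ioc_eq_integral_Ioo,
      intervalIntegral.integral_of_le ht, integral_const_mul]

lemma integrable_and_integral_of_re_pos_of_re_pos_of_ne (hl : 0 < lam.re) (hm : 0 < mu.re)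
    (ht : t ≤ 0) (hlm : lam ≠ mu) :
    Integrable (fun s : ℝ => greenG s lam * greenG (t - s) mu) ∧
      ∫ s : ℝ, greenG s lam * greenG (t - s) mu =
        (exp (mu * t) - exp (lam * t)) / (lam - mu) := by
  refine (integrable_and_integral_of_re_pos_of_re_pos hl hm ht).imp_right fun h => ?_
  rw [h, integral_exp_mul_complex (sub_ne_zero.2 hlm), mul_div_assoc', mul_sub,
    cexp_mul_mul_cexp_sub_mul]
  simp

lemma integrable_and_integral_of_re_pos_self (hl : 0 < lam.re) (ht : t ≤ 0) :
    Integrable (fun s : ℝ => greenG s lam * greenG (t - s) lam) ∧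
      ∫ s : ℝ, greenG s lam * greenG (t - s) lam = -(t * exp (lam * t)) := by
  refine (integrable_and_integral_of_re_pos_of_re_pos hl hl ht).imp_right fun h => ?_
  simp [h, mul_comm]

end greenG

/-- Key identity in the proof of **Theorem 15**, case `t < 0`: for `Re λ ≠ 0`, `Re μ ≠ 0`
and `t < 0`, the function `s ↦ g_s(λ) g_{t−s}(μ)` is integrable on `ℝ` and
`∫_{−∞}^{∞} g_s(λ) g_{t−s}(μ) ds = −exp_t⁻[λ, μ]`. -/
theorem integral_greenG_mul_greenG_neg (lam mu : ℂ) (hlam : lam.re ≠ 0) (hmu : mu.re ≠ 0)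
    (t : ℝ) (ht : t < 0) :
    Integrable (fun s : ℝ => greenG s lam * greenG (t - s) mu) ∧
    ∫ s : ℝ, greenG s lam * greenG (t - s) mu = -expMinusDD t lam mu := by
  rcases hlam.lt_or_gt with hl | hl <;> rcases hmu.lt_or_gt with hm | hm
  · simp [greenG.mul_greenG_sub_of_re_neg_of_re_neg hl hm ht, expMinusDD, hl, hm]
  · simpa [expMinusDD, hl, hm.not_gt, neg_div] using
      greenG.integrable_and_integral_of_re_neg_of_re_pos hl hm ht
  · simpa [expMinusDD, hl.not_gt, hm, neg_div] using
      greenG.integrable_and_integral_of_re_pos_of_re_neg hl hm ht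
  · by_cases hlm : lam = mu
    · subst hlm
      simpa [expMinusDD, hl.not_gt] using greenG.integrable_and_integral_of_re_pos_self hl ht.le
    · simpa [expMinusDD, hl.not_gt, hm.not_gt, hlm, neg_div', neg_sub] using
        greenG.integrable_and_integral_of_re_pos_of_re_pos_of_ne hl hm ht.le hlm
end

section
/- Let A be a complex N × N matrix whose spectrum does not intersect the imaginary axis, i.e. no eigenvalue λ of A satisfies Re λ = 0. Let x : ℝ → ℂ^N be differentiable with x′(t) = A x(t) for all t ∈ ℝ, and suppose x is bounded on ℝ. Then x(t) = 0 for all t ∈ ℝ. -/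
/-!
A scalar solution of `g' = μ g` is `g t = exp (μ t) g 0`, and `‖exp (μ t)‖ = exp (Re μ · t)` is
unbounded when `Re μ ≠ 0`, so a bounded scalar solution vanishes. In general, `x` takes values in
some `A`-invariant subspace `p` (initially everything). A functional `φ`, nonzero on `p`, with
`φ (A v) = μ φ v` on `p` exists (`μ` an eigenvalue of `A` on `p`, `φ` vanishing on the range of
`A - μ` there), so `φ ∘ x` is a bounded scalar solution, hence zero, and `x` takes values in the
strictly smaller invariant subspace `p ⊓ ker φ`.
-/

open Complex Matrix

theorem eq_cexp_mul_of_hasDerivAt {μ : ℂ} {g : ℝ → ℂ} (hg : ∀ t, HasDerivAt g (μ * g t) t)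
    (t : ℝ) : g t = cexp (μ * t) * g 0 := by
  have hderiv : ∀ s : ℝ, HasDerivAt (fun s : ℝ => cexp (-μ * s) * g s) 0 s := fun s => by
    have hexp : HasDerivAt (fun s : ℝ => cexp (-μ * s)) (cexp (-μ * s) * (-μ * 1)) s :=
      ((hasDerivAt_id s).ofReal_comp.const_mul (-μ)).cexp
    exact (hexp.mul (hg s)).congr_deriv (by ring)
  have hconst := is_const_of_deriv_eq_zero (fun s => (hderiv s).differentiableAt)
    (fun s => (hderiv s).deriv) t 0
  simp only [ofReal_zero, mul_zero, Complex.exp_zero, one_mul] at hconst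
  rw [← hconst, ← mul_assoc, ← Complex.exp_add]
  simp

theorem eq_zero_of_hasDerivAt_mul_of_bounded {μ : ℂ} (hμ : μ.re ≠ 0) {g : ℝ → ℂ}
    (hg : ∀ t, HasDerivAt g (μ * g t) t) {C : ℝ} (hC : ∀ t, ‖g t‖ ≤ C) (t : ℝ) : g t = 0 := by
  suffices g 0 = 0 by rw [eq_cexp_mul_of_hasDerivAt hg, this, mul_zero]
  by_contra h0
  have hpos : 0 < ‖g 0‖ := norm_pos_iff.2 h0
  set s := C / ‖g 0‖
  have hnorm : ‖g (s / μ.re)‖ = Real.exp s * ‖g 0‖ := by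
    rw [eq_cexp_mul_of_hasDerivAt hg, norm_mul, Complex.norm_exp]
    congr 2
    simp [field]
  have hle : (s + 1) * ‖g 0‖ ≤ C :=
    calc (s + 1) * ‖g 0‖ ≤ Real.exp s * ‖g 0‖ := by gcongr; exact Real.add_one_le_exp s
      _ ≤ C := hnorm ▸ hC _
  rw [add_one_mul, div_mul_cancel₀ _ hpos.ne'] at hle
  linarith

namespace Module.End

variable {K V : Type*} [Field K] [IsAlgClosed K] [AddCommGroup V] [Module K V]
  [FiniteDimensional K V]

theorem exists_hasEigenvalue_dual_comp_eq_smul [Nontrivial V] (f : End K V) :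
    ∃ μ : K, f.HasEigenvalue μ ∧ ∃ φ : Dual K V, φ ≠ 0 ∧ φ ∘ₗ f = μ • φ := by
  obtain ⟨μ, hμ⟩ := f.exists_eigenvalue
  have hnot_surj : ¬ Function.Surjective (f - μ • (1 : End K V)) := by
    rw [← LinearMap.injective_iff_surjective, ← LinearMap.ker_eq_bot, ← eigenspace_def]
    exact hasEigenvalue_iff.1 hμ
  obtain ⟨φ, hφ, hφ_range⟩ := Submodule.exists_dual_map_eq_bot_of_lt_top
    (lt_top_iff_ne_top.2 (mt LinearMap.range_eq_top.1 hnot_surj)) inferInstance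
  refine ⟨μ, hμ, φ, hφ, LinearMap.ext fun v => ?_⟩
  have : φ ((f - μ • (1 : End K V)) v) = 0 :=
    (Submodule.mem_bot K).1 (hφ_range ▸ Submodule.mem_map_of_mem (LinearMap.mem_range_self _ v))
  simpa [sub_eq_zero] using this

theorem exists_hasEigenvalue_dual_of_invariant {f : End K V} {p : Submodule K V}
    (hfp : ∀ v ∈ p, f v ∈ p) (hp : p ≠ ⊥) :
    ∃ μ : K, f.HasEigenvalue μ ∧ ∃ φ : Dual K V,
      (∀ v ∈ p, φ (f v) = μ * φ v) ∧ ¬ p ≤ LinearMap.ker φ := by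
  have : Nontrivial p := Submodule.nontrivial_iff_ne_bot.2 hp
  obtain ⟨μ, hμ, ψ, hψ, hψf⟩ := exists_hasEigenvalue_dual_comp_eq_smul (f.restrict hfp)
  obtain ⟨φ, rfl⟩ := LinearMap.exists_extend ψ
  refine ⟨μ, ?_, φ, fun v hv => ?_, fun hle => hψ ?_⟩
  · obtain ⟨u, hu⟩ := hμ.exists_hasEigenvector
    exact hasEigenvalue_of_hasEigenvector
      ⟨eigenspace_restrict_le_eigenspace f hfp μ ⟨u, hu.1, rfl⟩, by simpa using hu.2⟩
  · simpa using LinearMap.congr_fun hψf ⟨v, hv⟩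
  · ext v
    exact hle v.2

end Module.End

theorem eq_zero_of_hasDerivAt_of_bounded_of_forall_mem {V : Type*} [NormedAddCommGroup V]
    [NormedSpace ℂ V] [FiniteDimensional ℂ V] {f : Module.End ℂ V}
    (hf : ∀ μ : ℂ, f.HasEigenvalue μ → μ.re ≠ 0) {x : ℝ → V}
    (hx : ∀ t, HasDerivAt x (f (x t)) t) {C : ℝ} (hC : ∀ t, ‖x t‖ ≤ C)
    (p : Submodule ℂ V) (hfp : ∀ v ∈ p, f v ∈ p) (hxp : ∀ t, x t ∈ p) (t : ℝ) : x t = 0 := by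
  induction p using WellFoundedLT.induction with
  | ind p ih =>
    rcases eq_or_ne p ⊥ with rfl | hp
    · exact (Submodule.mem_bot ℂ).1 (hxp t)
    obtain ⟨μ, hμ, φ, hφf, hφp⟩ := Module.End.exists_hasEigenvalue_dual_of_invariant hfp hp
    let L := (LinearMap.toContinuousLinearMap φ).restrictScalars ℝ
    have hφx : ∀ t, HasDerivAt (fun t => φ (x t)) (μ * φ (x t)) t := fun t => by
      simpa [L, Function.comp_def, hφf _ (hxp t)] using L.hasFDerivAt.comp_hasDerivAt t (hx t)
    have hφx_bdd : ∀ t, ‖φ (x t)‖ ≤ ‖L‖ * C := fun t =>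
      (L.le_opNorm _).trans (mul_le_mul_of_nonneg_left (hC t) (norm_nonneg _))
    have hφx_zero := eq_zero_of_hasDerivAt_mul_of_bounded (hf μ hμ) hφx hφx_bdd
    refine ih (p ⊓ LinearMap.ker φ) (inf_lt_left.2 hφp) (fun v hv => ⟨hfp v hv.1, ?_⟩)
      (fun t => ⟨hxp t, hφx_zero t⟩)
    change φ (f v) = 0
    rw [hφf v hv.1, LinearMap.mem_ker.1 hv.2, mul_zero]

/-- If no eigenvalue of the complex `N × N` matrix `A` (i.e. no root of its characteristic
polynomial) lies on the imaginary axis, then every bounded differentiable solution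
`x : ℝ → ℂ^N` of `x′(t) = A x(t)` is identically zero. -/
theorem bounded_solution_of_homogeneous_eq_zero
    (N : ℕ) (A : Matrix (Fin N) (Fin N) ℂ)
    (hspec : ∀ lam : ℂ, A.charpoly.eval lam = 0 → lam.re ≠ 0)
    (x : ℝ → (Fin N → ℂ))
    (hx : ∀ t : ℝ, HasDerivAt x (A.mulVec (x t)) t)
    (hbdd : ∃ C : ℝ, ∀ t : ℝ, ‖x t‖ ≤ C) :
    ∀ t : ℝ, x t = 0 := by
  obtain ⟨C, hC⟩ := hbdd
  have hA : ∀ μ : ℂ, Module.End.HasEigenvalue (toLin' A) μ → μ.re ≠ 0 := fun μ hμ =>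
    hspec μ (by rwa [Module.End.hasEigenvalue_iff_isRoot_charpoly, charpoly_toLin'] at hμ)
  exact eq_zero_of_hasDerivAt_of_bounded_of_forall_mem hA hx hC ⊤ (fun _ _ => trivial)
    (fun _ => trivial)
end

section
/- Let λ ∈ ℂ with Re λ ≠ 0 and let f : ℝ → ℂ be bounded and continuous. Define x(t) = ∫_{−∞}^{∞} g_{t−s}(λ) f(s) ds. Then x is bounded on ℝ, differentiable with continuous derivative, and satisfies x′(t) = λ x(t) + f(t) for all t ∈ ℝ; moreover, x is the unique bounded differentiable function ℝ → ℂ satisfying this differential equation. -/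
/-! For `Re λ < 0` only the past contributes: `x(t) = e^{λt} ∫_{s ≤ t} e^{-λs} f(s) ds`, so the
fundamental theorem of calculus and the product rule give `x' = λx + f`, and since
`|e^{λ(t-s)}| = e^{Re λ (t-s)}` integrates to `1/|Re λ|` over `s ≤ t`, `‖x‖ ≤ sup ‖f‖ / |Re λ|`.
The reflection `t ↦ -t`, `λ ↦ -λ` turns `g` into `-g` and reduces the case `Re λ > 0` to this one.
The difference `z` of two bounded solutions solves `z' = λz`, so `z(t) = e^{λt} z(0)`, which is
unbounded unless `z(0) = 0`. -/

open Complex MeasureTheory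

open Set

theorem eq_cexp_mul_of_hasDerivAt_s19 {lam : ℂ} {z : ℝ → ℂ}
    (hz : ∀ t, HasDerivAt z (lam * z t) t) (t : ℝ) : z t = exp (lam * t) * z 0 := by
  have hw : ∀ u : ℝ, HasDerivAt (fun v : ℝ => exp (-(lam * v)) * z v) 0 u := by
    intro u
    have he : HasDerivAt (fun v : ℝ => -(lam * v)) (-lam) u := by
      simpa using ((hasDerivAt_id u).ofReal_comp.const_mul lam).fun_neg
    exact (he.cexp.fun_mul (hz u)).congr_deriv (by ring)
  have hconst := is_const_of_deriv_eq_zero (fun u => (hw u).differentiableAt)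
    (fun u => (hw u).deriv) t 0
  simp only [ofReal_zero, mul_zero, neg_zero, exp_zero, one_mul] at hconst
  rw [← hconst, ← mul_assoc, ← exp_add, add_neg_cancel, exp_zero, one_mul]

theorem eq_zero_of_hasDerivAt_of_norm_le {lam : ℂ} (hlam : lam.re ≠ 0) {z : ℝ → ℂ} {C : ℝ}
    (hzb : ∀ t, ‖z t‖ ≤ C) (hz : ∀ t, HasDerivAt z (lam * z t) t) (t : ℝ) : z t = 0 := by
  suffices hz0 : z 0 = 0 by rw [eq_cexp_mul_of_hasDerivAt_s19 hz, hz0, mul_zero]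
  by_contra hne
  have hpos : 0 < ‖z 0‖ := norm_pos_iff.2 hne
  -- at time `r / Re λ` the solution has norm `e^r ‖z 0‖ > r ‖z 0‖ = C`
  set r := C / ‖z 0‖
  have hre : (lam * ↑(r / lam.re)).re = r := by
    simp only [mul_re, ofReal_re, ofReal_im, mul_zero, sub_zero]
    field_simp
  have hbound := hzb (r / lam.re)
  rw [eq_cexp_mul_of_hasDerivAt_s19 hz, norm_mul, norm_exp, hre] at hbound
  have hr : r < Real.exp r := by linarith [Real.add_one_le_exp r]
  have hC : C < Real.exp r * ‖z 0‖ := by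
    calc C = r * ‖z 0‖ := (div_mul_cancel₀ C hpos.ne').symm
      _ < Real.exp r * ‖z 0‖ := by gcongr
  linarith

theorem hasDerivAt_setIntegral_Iic {E : Type*} [NormedAddCommGroup E] [NormedSpace ℝ E]
    [CompleteSpace E] {φ : ℝ → E} (hφ : Continuous φ) (hint : ∀ t, IntegrableOn φ (Iic t))
    (t : ℝ) : HasDerivAt (fun u => ∫ s in Iic u, φ s) (φ t) t := by
  have hsplit : (fun u => ∫ s in Iic u, φ s) =
      fun u => (∫ s in Iic 0, φ s) + ∫ s in (0)..u, φ s := by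
    funext u
    rw [← intervalIntegral.integral_Iic_sub_Iic (hint 0) (hint u), add_sub_cancel]
  rw [hsplit]
  exact (hφ.integral_hasStrictDerivAt 0 t).hasDerivAt.const_add _

theorem greenG_neg_neg (lam : ℂ) {u : ℝ} (hu : u ≠ 0) : greenG (-u) (-lam) = -greenG u lam := by
  rcases hu.lt_or_gt with hu | hu
  · simp only [greenG, Left.nonneg_neg_iff, hu.le, not_le.2 hu, ↓reduceIte, neg_re,
      Left.neg_neg_iff, ofReal_neg, mul_neg, neg_mul, neg_neg]
    split_ifs <;> simp
  · simp only [greenG, hu.le, not_le.2 (neg_neg_of_pos hu), ↓reduceIte, neg_re,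
      Left.neg_pos_iff, ofReal_neg, mul_neg, neg_mul, neg_neg]
    split_ifs <;> simp

noncomputable def greenIntegral (lam : ℂ) (f : ℝ → ℂ) (t : ℝ) : ℂ :=
  ∫ s : ℝ, greenG (t - s) lam * f s

section

variable {lam : ℂ} {f : ℝ → ℂ} {C : ℝ}

theorem greenIntegral_eq_of_re_neg (hlam : lam.re < 0) (t : ℝ) :
    greenIntegral lam f t = exp (lam * t) * ∫ s in Iic t, exp (-lam * s) * f s := by
  rw [greenIntegral, ← integral_const_mul, ← integral_indicator measurableSet_Iic]
  congr 1
  funext s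
  by_cases hst : s ≤ t
  · rw [indicator_of_mem (show s ∈ Iic t from hst), greenG, if_pos (sub_nonneg.2 hst),
      if_pos hlam, ← mul_assoc, ← exp_add]
    push_cast
    ring_nf
  · rw [indicator_of_notMem (show s ∉ Iic t from hst), greenG, if_neg (by linarith),
      if_neg (not_lt.2 hlam.le), zero_mul]

theorem integrableOn_cexp_neg_mul_Iic (hlam : lam.re < 0) (hf : AEStronglyMeasurable f)
    (hfb : ∀ s, ‖f s‖ ≤ C) (t : ℝ) :
    IntegrableOn (fun s : ℝ => exp (-lam * s) * f s) (Iic t) :=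
  (integrableOn_exp_mul_complex_Iic (by simpa using hlam) t).mul_bdd hf.restrict
    (Filter.Eventually.of_forall hfb)

theorem norm_greenIntegral_le_of_re_neg (hlam : lam.re < 0) (hfb : ∀ s, ‖f s‖ ≤ C) (t : ℝ) :
    ‖greenIntegral lam f t‖ ≤ C / -lam.re := by
  have hb : 0 < -lam.re := neg_pos.2 hlam
  have hnorm : ∀ s : ℝ, ‖exp (-lam * s) * f s‖ ≤ Real.exp (-lam.re * s) * C := fun s => by
    rw [norm_mul, norm_exp]
    simp only [neg_mul, neg_re, mul_re, ofReal_re, ofReal_im, mul_zero, sub_zero]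
    exact mul_le_mul_of_nonneg_left (hfb s) (Real.exp_pos _).le
  calc ‖greenIntegral lam f t‖
      = Real.exp (lam.re * t) * ‖∫ s in Iic t, exp (-lam * s) * f s‖ := by
        rw [greenIntegral_eq_of_re_neg hlam, norm_mul, norm_exp]
        simp
    _ ≤ Real.exp (lam.re * t) * ∫ s in Iic t, Real.exp (-lam.re * s) * C := by
        gcongr
        exact norm_integral_le_of_norm_le ((integrableOn_exp_mul_Iic hb t).mul_const C)
          (Filter.Eventually.of_forall hnorm)
    _ = C / -lam.re := by
        rw [integral_mul_const, integral_exp_mul_Iic hb, ← mul_assoc, mul_div_assoc',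
          ← Real.exp_add]
        simp only [neg_mul, add_neg_cancel, Real.exp_zero]
        ring

theorem hasDerivAt_greenIntegral_of_re_neg (hlam : lam.re < 0) (hf : Continuous f)
    (hfb : ∀ s, ‖f s‖ ≤ C) (t : ℝ) :
    HasDerivAt (greenIntegral lam f) (lam * greenIntegral lam f t + f t) t := by
  have hexp : HasDerivAt (fun v : ℝ => exp (lam * v)) (exp (lam * t) * lam) t := by
    simpa using ((hasDerivAt_id t).ofReal_comp.const_mul lam).cexp
  have hprim := hasDerivAt_setIntegral_Iic (by fun_prop)
    (integrableOn_cexp_neg_mul_Iic hlam hf.aestronglyMeasurable hfb) t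
  rw [funext (greenIntegral_eq_of_re_neg hlam)]
  refine (hexp.fun_mul hprim).congr_deriv ?_
  beta_reduce
  rw [← mul_assoc, ← exp_add, neg_mul, add_neg_cancel, exp_zero, one_mul]
  ring

theorem greenIntegral_eq_neg_comp_neg (t : ℝ) :
    greenIntegral lam f t = -greenIntegral (-lam) (fun s => f (-s)) (-t) := by
  -- the reflected kernel agrees with `-g` off the null set `{t}`
  have hae : ∀ᵐ s : ℝ, s ≠ t := by simp [ae_iff, measure_singleton]
  rw [greenIntegral, greenIntegral,
    ← integral_neg_eq_self (fun s => greenG (-t - s) (-lam) * f (-s)), ← integral_neg]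
  refine integral_congr_ae (hae.mono fun s hs => ?_)
  dsimp only
  rw [neg_neg, show -t - -s = -(t - s) by ring, greenG_neg_neg lam (sub_ne_zero.2 hs.symm),
    neg_mul, neg_neg]

theorem norm_greenIntegral_le (hlam : lam.re ≠ 0) (hfb : ∀ s, ‖f s‖ ≤ C) (t : ℝ) :
    ‖greenIntegral lam f t‖ ≤ C / |lam.re| := by
  rcases hlam.lt_or_gt with hneg | hpos
  · rw [abs_of_neg hneg]
    exact norm_greenIntegral_le_of_re_neg hneg hfb t
  · rw [greenIntegral_eq_neg_comp_neg, norm_neg, abs_of_pos hpos, ← neg_neg lam.re, ← neg_re]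
    exact norm_greenIntegral_le_of_re_neg (by simpa using hpos) (fun s => hfb (-s)) (-t)

theorem hasDerivAt_greenIntegral (hlam : lam.re ≠ 0) (hf : Continuous f) (hfb : ∀ s, ‖f s‖ ≤ C)
    (t : ℝ) : HasDerivAt (greenIntegral lam f) (lam * greenIntegral lam f t + f t) t := by
  rcases hlam.lt_or_gt with hneg | hpos
  · exact hasDerivAt_greenIntegral_of_re_neg hneg hf hfb t
  have hreflected := hasDerivAt_greenIntegral_of_re_neg (lam := -lam) (f := fun s => f (-s))
    (by simpa using hpos) (by fun_prop) (fun s => hfb (-s)) (-t)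
  rw [funext greenIntegral_eq_neg_comp_neg]
  refine ((hreflected.scomp t (hasDerivAt_neg' t)).fun_neg).congr_deriv ?_
  beta_reduce
  rw [neg_one_smul, neg_neg, neg_neg]
  ring

theorem eq_greenIntegral_of_hasDerivAt (hlam : lam.re ≠ 0) (hf : Continuous f)
    (hfb : ∀ s, ‖f s‖ ≤ C) {y : ℝ → ℂ} (hyb : ∃ C, ∀ t, ‖y t‖ ≤ C)
    (hy : ∀ t, HasDerivAt y (lam * y t + f t) t) (t : ℝ) : y t = greenIntegral lam f t := by
  obtain ⟨Cy, hyb⟩ := hyb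
  refine sub_eq_zero.1 (eq_zero_of_hasDerivAt_of_norm_le hlam (C := Cy + C / |lam.re|)
    (fun u => (norm_sub_le _ _).trans (add_le_add (hyb u) (norm_greenIntegral_le hlam hfb u)))
    (fun u => ((hy u).sub (hasDerivAt_greenIntegral hlam hf hfb u)).congr_deriv (by ring)) t)

end

/-- Scalar version of **Theorem 10**: for `Re λ ≠ 0` and a bounded continuous `f : ℝ → ℂ`,
the function `x(t) = ∫_{−∞}^{∞} g_{t−s}(λ) f(s) ds` is bounded, continuously
differentiable, satisfies `x′(t) = λ x(t) + f(t)` for all `t`, and is the unique bounded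
differentiable solution of this differential equation. -/
theorem greens_function_solves_bounded_solutions_problem
    (lam : ℂ) (hlam : lam.re ≠ 0) (f : ℝ → ℂ) (hf : Continuous f)
    (hfb : ∃ C : ℝ, ∀ t : ℝ, ‖f t‖ ≤ C) :
    (∃ C : ℝ, ∀ t : ℝ, ‖∫ s : ℝ, greenG (t - s) lam * f s‖ ≤ C) ∧
    (∀ t : ℝ, HasDerivAt (fun u : ℝ => ∫ s : ℝ, greenG (u - s) lam * f s)
      (lam * (∫ s : ℝ, greenG (t - s) lam * f s) + f t) t) ∧
    Continuous (deriv (fun u : ℝ => ∫ s : ℝ, greenG (u - s) lam * f s)) ∧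
    (∀ y : ℝ → ℂ, (∃ C : ℝ, ∀ t : ℝ, ‖y t‖ ≤ C) →
      (∀ t : ℝ, HasDerivAt y (lam * y t + f t) t) →
      ∀ t : ℝ, y t = ∫ s : ℝ, greenG (t - s) lam * f s) := by
  obtain ⟨C, hfb⟩ := hfb
  have hx := hasDerivAt_greenIntegral hlam hf hfb
  have hx' : deriv (greenIntegral lam f) = fun t => lam * greenIntegral lam f t + f t :=
    funext fun t => (hx t).deriv
  have hx_cont : Continuous (greenIntegral lam f) :=
    Differentiable.continuous fun t => (hx t).differentiableAt
  refine ⟨⟨C / |lam.re|, norm_greenIntegral_le hlam hfb⟩, hx, ?_,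
    fun y hyb hy => eq_greenIntegral_of_hasDerivAt hlam hf hfb hyb hy⟩
  show Continuous (deriv (greenIntegral lam f))
  rw [hx']
  exact (continuous_const.mul hx_cont).add hf
end
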